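/- arXiv:1903.01810 — 8 statements merged into one kernel-verified Lean document; each statement's English description precedes it below -/
import Mathlib

section
/- For all non-negative real numbers p and q, (1/2)(e^{q-p} + e^{p-q}) ≤ (p² + q²)·e^{p+q} + cos(p+q). -/
private lemma cosh_aux (x s : ℝ) (hx : 0 ≤ x) (hxs : x ≤ s) :
    (1 / 2) * (Real.exp (-x) + Real.exp x) ≤ 1 + x ^ 2 / 2 * Real.exp s := by
  set a := Real.exp (x / 2) with ha
  set b := Real.exp (-(x / 2)) with hb
  have hab : a * b = 1 := by
    rw [ha, hb, ← Real.exp_add]; simp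
  have hbpos : 0 < b := Real.exp_pos _
  have hapos : 0 < a := Real.exp_pos _
  have hex : Real.exp x = a ^ 2 := by
    rw [ha, ← Real.exp_nat_mul]; ring_nf
  have henx : Real.exp (-x) = b ^ 2 := by
    rw [hb, ← Real.exp_nat_mul]; ring_nf
  -- a - b ≤ x * a : since b = a * exp(-x) ... use 1 - x ≤ exp(-x) at x
  have h1 : 1 - x ≤ Real.exp (-x) := by
    have := Real.add_one_le_exp (-x); linarith
  have hba : b = a * Real.exp (-x) := by
    rw [ha, hb, ← Real.exp_add]; ring_nf
  have hle : a - b ≤ x * a := by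
    rw [hba]; nlinarith
  have hge : 0 ≤ a - b := by
    have : b ≤ a := Real.exp_le_exp.mpr (by linarith)
    linarith
  have hsq : (a - b) ^ 2 ≤ x ^ 2 * a ^ 2 := by
    nlinarith
  have hes : a ^ 2 ≤ Real.exp s := by
    rw [← hex]; exact Real.exp_le_exp.mpr hxs
  nlinarith [sq_nonneg x]

theorem key_ineq_two (p q : ℝ) (hp : 0 ≤ p) (hq : 0 ≤ q) :
    (1 / 2) * (Real.exp (q - p) + Real.exp (p - q)) ≤
      (p ^ 2 + q ^ 2) * Real.exp (p + q) + Real.cos (p + q) := by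
  wlog hpq : q ≤ p generalizing p q
  · have h := this q p hq hp (le_of_not_ge hpq)
    rw [add_comm q p] at h
    linarith
  have hx : (0:ℝ) ≤ p - q := by linarith
  have hxs : p - q ≤ p + q := by linarith
  have key := cosh_aux (p - q) (p + q) hx hxs
  have hqp : q - p = -(p - q) := by ring
  rw [hqp]
  have hcos : 1 - (p + q) ^ 2 / 2 ≤ Real.cos (p + q) :=
    Real.one_sub_sq_div_two_le_cos
  have hexp1 : (1:ℝ) ≤ Real.exp (p + q) := Real.one_le_exp (by linarith)
  nlinarith [sq_nonneg (p + q)]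
end

section
/- For all non-negative real numbers p and q, (1/2)(e^{q-p} + e^{p-q}) ≤ e^{p+q} + cos(p+q). -/
theorem key_ineq_three (p q : ℝ) (hp : 0 ≤ p) (hq : 0 ≤ q) :
    (1 / 2) * (Real.exp (q - p) + Real.exp (p - q)) ≤
      Real.exp (p + q) + Real.cos (p + q) := by
  set s := p + q with hs
  have hs0 : 0 ≤ s := by positivity
  have h1 : (1 / 2) * (Real.exp (q - p) + Real.exp (p - q)) = Real.cosh (p - q) := by
    rw [Real.cosh_eq]; ring_nf
  have h2 : Real.cosh (p - q) ≤ Real.cosh s := by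
    rw [Real.cosh_le_cosh]
    rw [abs_of_nonneg hs0]
    rw [abs_le]
    constructor <;> simp [hs] <;> linarith
  have key : 0 ≤ Real.cos s + Real.sinh s := by
    rcases le_or_gt s 1 with h | h
    · have hc : 0 < Real.cos s := by
        apply Real.cos_pos_of_mem_Ioo
        constructor
        · linarith [Real.pi_gt_three]
        · linarith [Real.pi_gt_three]
      have hsin : 0 ≤ Real.sinh s := Real.sinh_nonneg_iff.mpr hs0
      linarith
    · have hsin : s < Real.sinh s := Real.self_lt_sinh_iff.mpr (by linarith)
      have hc : -1 ≤ Real.cos s := Real.neg_one_le_cos s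
      linarith
  have h3 : Real.cosh s = Real.exp s - Real.sinh s := by
    rw [Real.sinh_eq, Real.cosh_eq]; ring
  rw [h1]
  calc Real.cosh (p - q) ≤ Real.cosh s := h2
    _ ≤ Real.exp s + Real.cos s := by rw [h3]; linarith
    _ = Real.exp (p + q) + Real.cos (p + q) := by rw [hs]
end

section
/- For all non-negative real numbers p and q, e^{-2p} + e^{-2q} + 2·e^{-(p+q)}·sin(p+q) ≤ 2. -/
theorem key_ineq_one_reform (p q : ℝ) (hp : 0 ≤ p) (hq : 0 ≤ q) :
    Real.exp (-2 * p) + Real.exp (-2 * q)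
      + 2 * Real.exp (-(p + q)) * Real.sin (p + q) ≤ 2 := by
  have hs : 0 ≤ p + q := by linarith
  have h1 : Real.sin (p + q) ≤ Real.sinh (p + q) :=
    (Real.sin_le hs).trans (Real.self_le_sinh_iff.mpr hs)
  have hepos : 0 < Real.exp (-(p + q)) := Real.exp_pos _
  have h2 : 2 * Real.exp (-(p + q)) * Real.sin (p + q)
      ≤ 2 * Real.exp (-(p + q)) * Real.sinh (p + q) := by nlinarith
  have h3 : 2 * Real.exp (-(p + q)) * Real.sinh (p + q)
      = 1 - Real.exp (-2 * p) * Real.exp (-2 * q) := by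
    have e1 : Real.exp (-(p + q)) * Real.exp (p + q) = 1 := by
      rw [← Real.exp_add]; simp
    have e2 : Real.exp (-(p + q)) * Real.exp (-(p + q))
        = Real.exp (-2 * p) * Real.exp (-2 * q) := by
      rw [← Real.exp_add, ← Real.exp_add]; ring_nf
    rw [Real.sinh_eq]
    nlinarith [e1, e2]
  have h4 : Real.exp (-2 * p) ≤ 1 := Real.exp_le_one_iff.mpr (by linarith)
  have h5 : Real.exp (-2 * q) ≤ 1 := Real.exp_le_one_iff.mpr (by linarith)
  nlinarith [Real.exp_pos (-2*p), Real.exp_pos (-2*q)]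
end

section
/- For all non-negative real numbers p and q, e^{-2p} + e^{-2q} - 2·e^{-(p+q)}·cos(p+q) ≤ 2(p² + q²). -/
theorem key_ineq_two_reform (p q : ℝ) (hp : 0 ≤ p) (hq : 0 ≤ q) :
    Real.exp (-2 * p) + Real.exp (-2 * q)
      - 2 * Real.exp (-(p + q)) * Real.cos (p + q) ≤ 2 * (p ^ 2 + q ^ 2) := by
  have e1 : Real.exp (-2 * p) = Real.exp (-p) ^ 2 := by
    rw [← Real.exp_nat_mul]; ring_nf
  have e2 : Real.exp (-2 * q) = Real.exp (-q) ^ 2 := by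
    rw [← Real.exp_nat_mul]; ring_nf
  have e3 : Real.exp (-(p + q)) = Real.exp (-p) * Real.exp (-q) := by
    rw [← Real.exp_add]; ring_nf
  have hcos : 1 - (p + q) ^ 2 / 2 ≤ Real.cos (p + q) := Real.one_sub_sq_div_two_le_cos
  have hcos1 : Real.cos (p + q) ≤ 1 := Real.cos_le_one _
  have hep : Real.exp (-p) ≤ 1 := Real.exp_le_one_iff.mpr (by linarith)
  have heq : Real.exp (-q) ≤ 1 := Real.exp_le_one_iff.mpr (by linarith)
  have hepp : 0 < Real.exp (-p) := Real.exp_pos _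
  have heqp : 0 < Real.exp (-q) := Real.exp_pos _
  -- Lipschitz: (e^{-p} - e^{-q})^2 ≤ (p - q)^2
  have lip : (Real.exp (-p) - Real.exp (-q)) ^ 2 ≤ (p - q) ^ 2 := by
    rcases le_total p q with h | h
    · have h1 : Real.exp (-q) ≤ Real.exp (-p) := Real.exp_le_exp.mpr (by linarith)
      have h2 : Real.exp (-p) - Real.exp (-q) ≤ q - p := by
        have key : 1 - (q - p) ≤ Real.exp (-(q - p)) := by
          have := Real.add_one_le_exp (-(q - p)); linarith
        have : Real.exp (-p) * (1 - Real.exp (-(q - p))) ≤ 1 * (q - p) := by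
          apply mul_le_mul hep (by linarith) (by have := Real.exp_le_one_iff.mpr (show -(q-p) ≤ 0 by linarith); linarith) zero_le_one
        have hmul : Real.exp (-p) * Real.exp (-(q - p)) = Real.exp (-q) := by
          rw [← Real.exp_add]; ring_nf
        nlinarith
      nlinarith
    · have h1 : Real.exp (-p) ≤ Real.exp (-q) := Real.exp_le_exp.mpr (by linarith)
      have h2 : Real.exp (-q) - Real.exp (-p) ≤ p - q := by
        have key : 1 - (p - q) ≤ Real.exp (-(p - q)) := by
          have := Real.add_one_le_exp (-(p - q)); linarith
        have : Real.exp (-q) * (1 - Real.exp (-(p - q))) ≤ 1 * (p - q) := by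
          apply mul_le_mul heq (by linarith) (by have := Real.exp_le_one_iff.mpr (show -(p-q) ≤ 0 by linarith); linarith) zero_le_one
        have hmul : Real.exp (-q) * Real.exp (-(p - q)) = Real.exp (-p) := by
          rw [← Real.exp_add]; ring_nf
        nlinarith
      nlinarith
  rw [e1, e2, e3]
  nlinarith [mul_le_one₀ hep heqp.le heq, mul_pos hepp heqp]
end

section
/- For every complex number k with Re k > 0 and Im k > 0 (principal square root of λ ∈ ℂ\[0,∞)) and all real t ≥ 0, |√k · e^{-√(-k)·t} − √(-k) · e^{-√k·t}| ≤ √2 · √|k|, where √(-k) and √k denote principal square roots. -/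
/-!
Write `a = √k`. Since `Im k > 0`, the principal root of `-k` is `-i a`, so the expression equals
`a (e^{i a t} + i e^{-a t})`. With `p = Re (a t) ≥ 0` and `q = Im (a t) ≥ 0`,
`|e^{i a t} + i e^{-a t}|² = e^{-2p} + e^{-2q} + 2 e^{-(p+q)} sin (p+q)`, and `sin s ≤ s ≤ sinh s`
bounds this by `e^{-2p} + e^{-2q} + 1 - e^{-2p} e^{-2q} = 2 - (1 - e^{-2p}) (1 - e^{-2q}) ≤ 2`.
-/

open Complex

lemma Real.exp_neg_two_mul_add_exp_neg_two_mul_add_sin_le_two {p q : ℝ} (hp : 0 ≤ p)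
    (hq : 0 ≤ q) :
    Real.exp (-(2 * p)) + Real.exp (-(2 * q)) + 2 * Real.exp (-(p + q)) * Real.sin (p + q) ≤ 2 := by
  have hs : 0 ≤ p + q := add_nonneg hp hq
  have hsin :
      2 * Real.exp (-(p + q)) * Real.sin (p + q) ≤ 1 - Real.exp (-(2 * p)) * Real.exp (-(2 * q)) :=
    calc 2 * Real.exp (-(p + q)) * Real.sin (p + q)
        ≤ 2 * Real.exp (-(p + q)) * Real.sinh (p + q) := by
          gcongr
          exact (Real.sin_le hs).trans (Real.self_le_sinh_iff.2 hs)
      _ = 1 - Real.exp (-(2 * p)) * Real.exp (-(2 * q)) := by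
          rw [Real.sinh_eq, ← Real.exp_add]
          field_simp
          rw [mul_sub, ← Real.exp_add, ← Real.exp_add]
          ring_nf
          simp
  have hp1 : Real.exp (-(2 * p)) ≤ 1 := Real.exp_le_one_iff.2 (by linarith)
  have hq1 : Real.exp (-(2 * q)) ≤ 1 := Real.exp_le_one_iff.2 (by linarith)
  nlinarith [mul_nonneg (sub_nonneg.2 hp1) (sub_nonneg.2 hq1)]

namespace Complex

lemma norm_cpow_inv_two (z : ℂ) : ‖z ^ (2⁻¹ : ℂ)‖ = √‖z‖ := by
  rw [Real.sqrt_eq_rpow, ← norm_cpow_real]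
  norm_num

lemma neg_cpow_inv_two_of_im_pos {z : ℂ} (hz : 0 < z.im) :
    (-z) ^ (2⁻¹ : ℂ) = -I * z ^ (2⁻¹ : ℂ) := by
  have hnz : (-z).im < 0 := by simpa using hz
  apply Complex.ext
  · simp [cpow_inv_two_re, cpow_inv_two_im_eq_sqrt hz.le, sub_eq_add_neg]
  · simp [cpow_inv_two_re, cpow_inv_two_im_eq_neg_sqrt hnz]

lemma normSq_exp_I_mul_add_I_mul_exp_neg (w : ℂ) :
    normSq (exp (I * w) + I * exp (-w)) =
      Real.exp (-(2 * w.re)) + Real.exp (-(2 * w.im))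
        + 2 * Real.exp (-(w.re + w.im)) * Real.sin (w.re + w.im) := by
  have hre : (exp (I * w) + I * exp (-w)).re =
      Real.exp (-w.im) * Real.cos w.re + Real.exp (-w.re) * Real.sin w.im := by
    simp [exp_re, exp_im]
  have him : (exp (I * w) + I * exp (-w)).im =
      Real.exp (-w.im) * Real.sin w.re + Real.exp (-w.re) * Real.cos w.im := by
    simp [exp_re, exp_im]
  have hexp (x y : ℝ) : Real.exp (-(x + y)) = Real.exp (-x) * Real.exp (-y) := by
    rw [neg_add, Real.exp_add]
  rw [normSq_apply, hre, him, Real.sin_add, two_mul, two_mul, hexp, hexp, hexp]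
  linear_combination Real.exp (-w.im) * Real.exp (-w.im) * Real.sin_sq_add_cos_sq w.re
    + Real.exp (-w.re) * Real.exp (-w.re) * Real.sin_sq_add_cos_sq w.im

lemma norm_exp_I_mul_add_I_mul_exp_neg_le {w : ℂ} (hre : 0 ≤ w.re) (him : 0 ≤ w.im) :
    ‖exp (I * w) + I * exp (-w)‖ ≤ √2 := by
  rw [norm_def, normSq_exp_I_mul_add_I_mul_exp_neg]
  exact Real.sqrt_le_sqrt (Real.exp_neg_two_mul_add_exp_neg_two_mul_add_sin_le_two hre him)

end Complex

theorem green_bound_1d_general (k : ℂ) (him : 0 < k.im) (t : ℝ) (ht : 0 ≤ t) :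
    ‖k ^ (1 / 2 : ℂ) * Complex.exp (-((-k) ^ (1 / 2 : ℂ)) * t)
        - (-k) ^ (1 / 2 : ℂ) * Complex.exp (-(k ^ (1 / 2 : ℂ)) * t)‖
      ≤ Real.sqrt 2 * Real.sqrt ‖k‖ := by
  rw [one_div, neg_cpow_inv_two_of_im_pos him]
  set a := k ^ (2⁻¹ : ℂ) with ha
  have ha_re : 0 ≤ a.re := by rw [ha, cpow_inv_two_re]; positivity
  have ha_im : 0 ≤ a.im := by rw [ha, cpow_inv_two_im_eq_sqrt him.le]; positivity
  have hfactor : a * exp (-(-I * a) * t) - -I * a * exp (-a * t) =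
      a * (exp (I * (a * t)) + I * exp (-(a * t))) := by
    rw [show -(-I * a) * t = I * (a * t) by ring, show -a * t = -(a * t) by ring]
    ring
  rw [hfactor, norm_mul, ha, norm_cpow_inv_two, mul_comm (√2)]
  gcongr
  exact norm_exp_I_mul_add_I_mul_exp_neg_le (by simpa using mul_nonneg ha_re ht)
    (by simpa using mul_nonneg ha_im ht)

/-- The pointwise bound on the one-dimensional biharmonic Green's function:
for `k` in the open first quadrant (the principal square root of `λ ∈ ℂ \ [0,∞)`) and
`t = |x − y| ≥ 0`, one has `|√k e^{−√(−k) t} − √(−k) e^{−√k t}| ≤ √2 √|k|`, where all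
square roots are principal (`cpow (1/2)`). -/
theorem green_bound_1d (k : ℂ) (hre : 0 < k.re) (him : 0 < k.im) (t : ℝ) (ht : 0 ≤ t) :
    ‖k ^ (1 / 2 : ℂ) * Complex.exp (-((-k) ^ (1 / 2 : ℂ)) * t)
        - (-k) ^ (1 / 2 : ℂ) * Complex.exp (-(k ^ (1 / 2 : ℂ)) * t)‖
      ≤ Real.sqrt 2 * Real.sqrt ‖k‖ :=
  green_bound_1d_general k him t ht
end

section
/- For every complex number k with Re k > 0 and Im k > 0 and all real t ≥ 0, |e^{-√(-k)·t} − e^{-√k·t}| ≤ √2 · √|k| · t, where square roots are principal. -/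
/-! The principal root of `-k` is `-i` times that of `k`, and for `Im k ≥ 0` the root `k^{1/2}`
lies in the closed first quadrant. Hence both exponents `-(-k)^{1/2} t = i k^{1/2} t` and
`-k^{1/2} t` lie in the closed left half-plane, on which `exp` is `1`-Lipschitz because
`|exp' z| = e^{Re z} ≤ 1`. Their difference is `(1 + i) k^{1/2} t`, of modulus `√2 √|k| t`. -/

open Complex

namespace Complex

lemma norm_exp_sub_exp_le_of_re_nonpos {z w : ℂ} (hz : z.re ≤ 0) (hw : w.re ≤ 0) :
    ‖exp z - exp w‖ ≤ ‖z - w‖ := by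
  have h := (convex_halfSpace_re_le (0 : ℝ)).norm_image_sub_le_of_norm_deriv_le (f := exp)
    (C := 1) (fun _ _ => differentiableAt_exp) (fun x hx => ?_) hw hz
  · simpa using h
  · rw [deriv_exp, norm_exp]
    exact Real.exp_le_one_iff.2 hx

lemma norm_exp_neg_mul_sub_exp_neg_mul_le {a b : ℂ} (ha : 0 ≤ a.re) (hb : 0 ≤ b.re) {t : ℝ}
    (ht : 0 ≤ t) : ‖exp (-a * t) - exp (-b * t)‖ ≤ ‖a - b‖ * t := by
  refine (norm_exp_sub_exp_le_of_re_nonpos ?_ ?_).trans_eq ?_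
  · simpa using mul_nonneg ha ht
  · simpa using mul_nonneg hb ht
  · rw [← sub_mul, neg_sub_neg, norm_mul, norm_sub_rev, norm_real, Real.norm_of_nonneg ht]

lemma re_cpow_one_div_two_nonneg (z : ℂ) : 0 ≤ (z ^ (1 / 2 : ℂ)).re := by
  rw [one_div, cpow_inv_two_re]
  exact Real.sqrt_nonneg _

lemma im_cpow_one_div_two_nonneg {z : ℂ} (hz : 0 ≤ z.im) : 0 ≤ (z ^ (1 / 2 : ℂ)).im := by
  rw [one_div, cpow_inv_two_im_eq_sqrt hz]
  exact Real.sqrt_nonneg _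

lemma neg_cpow_one_div_two_of_im_pos {z : ℂ} (hz : 0 < z.im) :
    (-z) ^ (1 / 2 : ℂ) = -I * z ^ (1 / 2 : ℂ) := by
  have hneg : (-z).im < 0 := by simpa using hz
  apply Complex.ext
  · simp [one_div, cpow_inv_two_re, cpow_inv_two_im_eq_sqrt hz.le, sub_eq_add_neg]
  · simp [one_div, cpow_inv_two_im_eq_neg_sqrt hneg, cpow_inv_two_re]

lemma norm_cpow_one_div_two (z : ℂ) : ‖z ^ (1 / 2 : ℂ)‖ = √‖z‖ := by
  rw [show (1 / 2 : ℂ) = ((1 / 2 : ℝ) : ℂ) by norm_num, norm_cpow_real, Real.sqrt_eq_rpow]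

end Complex

theorem green_bound_3d_general (k : ℂ) (him : 0 < k.im) (t : ℝ) (ht : 0 ≤ t) :
    ‖Complex.exp (-((-k) ^ (1 / 2 : ℂ)) * t)
        - Complex.exp (-(k ^ (1 / 2 : ℂ)) * t)‖
      ≤ Real.sqrt 2 * Real.sqrt ‖k‖ * t := by
  set b := k ^ (1 / 2 : ℂ)
  have hb_re : 0 ≤ b.re := re_cpow_one_div_two_nonneg k
  have hIb_re : 0 ≤ (-I * b).re := by
    simpa only [neg_mul, neg_re, mul_re, I_re, I_im, zero_mul, one_mul, zero_sub, neg_neg]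
      using im_cpow_one_div_two_nonneg him.le
  have hdiff : ‖-I * b - b‖ = √2 * √‖k‖ := by
    rw [show -I * b - b = -((1 + I) * b) by ring, norm_neg, norm_mul, norm_cpow_one_div_two]
    norm_num [norm_def, normSq_apply]
  rw [neg_cpow_one_div_two_of_im_pos him, ← hdiff]
  exact norm_exp_neg_mul_sub_exp_neg_mul_le hIb_re hb_re ht

/-- Pointwise estimate for the three-dimensional biharmonic Green's function:
for `k` in the open first quadrant and `t ≥ 0`,
`|e^{−√(−k) t} − e^{−√k t}| ≤ √2 √|k| t`, with principal square roots. -/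
theorem green_bound_3d (k : ℂ) (hre : 0 < k.re) (him : 0 < k.im) (t : ℝ) (ht : 0 ≤ t) :
    ‖Complex.exp (-((-k) ^ (1 / 2 : ℂ)) * t)
        - Complex.exp (-(k ^ (1 / 2 : ℂ)) * t)‖
      ≤ Real.sqrt 2 * Real.sqrt ‖k‖ * t :=
  green_bound_3d_general k him t ht
end

section
/- For every complex number k with Re k > 0 and Im k > 0 and all real t ≥ 0, |e^{-√(-k)·t} − e^{-√k·t}| ≤ √2, where square roots are principal. -/
/-!
Write `z = √k`. Since `Im k > 0`, `√(-k) = -i z`, so with `w = z t = p + i q` (`p, q ≥ 0`) the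
difference is `e^{i w} - e^{-w}`, whose squared modulus is `2 e^{-(p+q)} (cosh (p - q) - cos (p + q))`.
Because `cosh (p - q) ≤ cosh (p + q)` and `-cos s ≤ sinh s` for `s ≥ 0`, this is at most
`2 e^{-(p+q)} e^{p+q} = 2`.
-/

open Complex

namespace Real

theorem neg_cos_le_sinh {s : ℝ} (hs : 0 ≤ s) : -cos s ≤ sinh s := by
  rcases le_total s (π / 2) with h | h
  · linarith [cos_nonneg_of_mem_Icc ⟨by linarith [pi_pos], h⟩, sinh_nonneg_iff.mpr hs]
  · linarith [self_le_sinh_iff.mpr hs, neg_one_le_cos s, pi_gt_three]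

theorem cosh_sub_sub_cos_add_le_exp_add {p q : ℝ} (hp : 0 ≤ p) (hq : 0 ≤ q) :
    cosh (p - q) - cos (p + q) ≤ exp (p + q) := by
  have hcosh : cosh (p - q) ≤ cosh (p + q) := by
    rw [cosh_le_cosh, abs_of_nonneg (add_nonneg hp hq)]
    exact abs_le.mpr ⟨by linarith, by linarith⟩
  linarith [neg_cos_le_sinh (add_nonneg hp hq), cosh_add_sinh (p + q)]

end Real

namespace Complex

theorem sq_norm_exp_mul_I_sub_exp_neg (w : ℂ) :
    ‖exp (I * w) - exp (-w)‖ ^ 2 =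
      2 * Real.exp (-(w.re + w.im)) * (Real.cosh (w.re - w.im) - Real.cos (w.re + w.im)) := by
  rw [← normSq_eq_norm_sq, normSq_apply]
  simp only [sub_re, sub_im, exp_re, exp_im, mul_re, mul_im, neg_re, neg_im, I_re, I_im]
  simp only [zero_mul, one_mul, zero_add, Real.cos_neg, Real.sin_neg, Real.cosh_eq,
    neg_add, sub_eq_add_neg, neg_neg, Real.exp_add, Real.cos_add]
  have exp_mul_exp_neg (x : ℝ) : Real.exp x * Real.exp (-x) = 1 := by
    rw [← Real.exp_add, add_neg_cancel, Real.exp_zero]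
  linear_combination
    Real.exp (-w.im) ^ 2 * (Real.sin_sq_add_cos_sq w.re - exp_mul_exp_neg w.re) +
      Real.exp (-w.re) ^ 2 * (Real.sin_sq_add_cos_sq w.im - exp_mul_exp_neg w.im)

theorem norm_exp_mul_I_sub_exp_neg_le_sqrt_two {w : ℂ} (hre : 0 ≤ w.re) (him : 0 ≤ w.im) :
    ‖exp (I * w) - exp (-w)‖ ≤ √2 := by
  rw [Real.le_sqrt (norm_nonneg _) zero_le_two, sq_norm_exp_mul_I_sub_exp_neg]
  calc _ ≤ 2 * Real.exp (-(w.re + w.im)) * Real.exp (w.re + w.im) := by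
        gcongr; exact Real.cosh_sub_sub_cos_add_le_exp_add hre him
    _ = 2 := by rw [mul_assoc, ← Real.exp_add, neg_add_cancel, Real.exp_zero, mul_one]

theorem neg_cpow_inv_two {k : ℂ} (hk : 0 < k.im) : (-k) ^ (2⁻¹ : ℂ) = -I * k ^ (2⁻¹ : ℂ) := by
  apply Complex.ext
  · simp [cpow_inv_two_re, cpow_inv_two_im_eq_sqrt hk.le, sub_eq_add_neg]
  · have : (-k).im < 0 := by simpa using hk
    simp [cpow_inv_two_im_eq_neg_sqrt this, cpow_inv_two_re]

end Complex

theorem green_bound_rollnik_general (k : ℂ) (him : 0 < k.im) (t : ℝ) (ht : 0 ≤ t) :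
    ‖Complex.exp (-((-k) ^ (1 / 2 : ℂ)) * t)
        - Complex.exp (-(k ^ (1 / 2 : ℂ)) * t)‖
      ≤ Real.sqrt 2 := by
  rw [one_div, neg_cpow_inv_two him]
  set z := k ^ (2⁻¹ : ℂ)
  rw [show -(-I * z) * t = I * (z * t) by ring, show -z * t = -(z * t) by ring]
  apply norm_exp_mul_I_sub_exp_neg_le_sqrt_two
  · rw [re_mul_ofReal, cpow_inv_two_re]
    positivity
  · rw [im_mul_ofReal, cpow_inv_two_im_eq_sqrt him.le]
    positivity

/-- Pointwise estimate used for the Rollnik-class bound: for `k` in the open first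
quadrant and `t ≥ 0`, `|e^{−√(−k) t} − e^{−√k t}| ≤ √2`, with principal square roots. -/
theorem green_bound_rollnik (k : ℂ) (hre : 0 < k.re) (him : 0 < k.im) (t : ℝ) (ht : 0 ≤ t) :
    ‖Complex.exp (-((-k) ^ (1 / 2 : ℂ)) * t)
        - Complex.exp (-(k ^ (1 / 2 : ℂ)) * t)‖
      ≤ Real.sqrt 2 :=
  green_bound_rollnik_general k him t ht
end

section
/- Let α ∈ ℂ and let k ∈ ℂ satisfy k³ = 2^{-3/2} α e^{-iπ/4}. Then there exists such a k with Re k > 0 and Im k > 0 if and only if arg α ∈ (π/4, 7π/4), equivalently Re α < |Im α|. -/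
/-!
The cubes of the open first quadrant `{r e^{iθ} : r > 0, 0 < θ < π/2}` are the points
`r³ e^{3iθ}` with `3θ ∈ (0, 3π/2)`, i.e. exactly the complement of the closed fourth quadrant
`{re ≥ 0, im ≤ 0}`. Since `2^{-3/2} e^{-iπ/4} = (1 - i)/4`, the right-hand side is `α` rotated
by `-π/4` and scaled positively, so it avoids the closed fourth quadrant iff
`Im α > Re α` or `Re α + Im α < 0`, i.e. `Re α < |Im α|`.
-/

open Complex Real

namespace Complex

theorem ofReal_rpow_inv_mul_exp_pow {w : ℂ} {n : ℕ} (hn : n ≠ 0) {θ : ℝ}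
    (hθ : exp (↑(n * θ) * I) = exp (arg w * I)) :
    (((‖w‖ ^ (1 / n : ℝ) : ℝ) : ℂ) * exp (θ * I)) ^ n = w := by
  have hroot : ((‖w‖ ^ (1 / n : ℝ) : ℝ) : ℂ) ^ n = ‖w‖ := by
    rw [← ofReal_pow, ← Real.rpow_natCast, ← Real.rpow_mul (norm_nonneg w),
      one_div_mul_cancel (by exact_mod_cast hn), Real.rpow_one]
  rw [mul_pow, ← exp_nat_mul, hroot, ← mul_assoc, ← ofReal_natCast, ← ofReal_mul, hθ,
    norm_mul_exp_arg_mul_I]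

theorem ofReal_mul_exp_re_pos_im_pos {r θ : ℝ} (hr : 0 < r) (hθ : θ ∈ Set.Ioo 0 (π / 2)) :
    0 < (r * exp (θ * I)).re ∧ 0 < (r * exp (θ * I)).im := by
  rw [re_ofReal_mul, im_ofReal_mul, exp_ofReal_mul_I_re, exp_ofReal_mul_I_im]
  exact ⟨mul_pos hr (Real.cos_pos_of_mem_Ioo ⟨by linarith [hθ.1, Real.pi_pos], hθ.2⟩),
    mul_pos hr (Real.sin_pos_of_pos_of_lt_pi hθ.1 (by linarith [hθ.2, Real.pi_pos]))⟩

theorem exists_pow_three_eq_re_pos_im_pos {w : ℂ} (hw : w ≠ 0) {θ : ℝ}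
    (hθ : θ ∈ Set.Ioo 0 (π / 2)) (h3θ : exp (↑(3 * θ) * I) = exp (arg w * I)) :
    ∃ k : ℂ, k ^ 3 = w ∧ 0 < k.re ∧ 0 < k.im :=
  ⟨_, by exact_mod_cast ofReal_rpow_inv_mul_exp_pow three_ne_zero (by exact_mod_cast h3θ),
    ofReal_mul_exp_re_pos_im_pos (Real.rpow_pos_of_pos (norm_pos_iff.2 hw) _) hθ⟩

theorem im_pow_three_pos_or_re_pow_three_neg {k : ℂ} (hre : 0 < k.re) (him : 0 < k.im) :
    0 < (k ^ 3).im ∨ (k ^ 3).re < 0 := by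
  have hre3 : (k ^ 3).re = k.re * (k.re ^ 2 - 3 * k.im ^ 2) := by
    simp only [pow_succ, pow_zero, one_mul, mul_re, mul_im]; ring
  have him3 : (k ^ 3).im = k.im * (3 * k.re ^ 2 - k.im ^ 2) := by
    simp only [pow_succ, pow_zero, one_mul, mul_re, mul_im]; ring
  rw [hre3, him3]
  rcases lt_or_ge (k.im ^ 2) (3 * k.re ^ 2) with h | h
  · exact Or.inl (mul_pos him (by linarith))
  · exact Or.inr (mul_neg_of_pos_of_neg hre (by nlinarith))

theorem exists_pow_three_eq_re_pos_im_pos_iff {w : ℂ} :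
    (∃ k : ℂ, k ^ 3 = w ∧ 0 < k.re ∧ 0 < k.im) ↔ 0 < w.im ∨ w.re < 0 := by
  refine ⟨fun ⟨k, hk, hre, him⟩ ↦ hk ▸ im_pow_three_pos_or_re_pow_three_neg hre him, fun h ↦ ?_⟩
  have hw : w ≠ 0 := by rintro rfl; simp at h
  have harg_gt := neg_pi_lt_arg w
  have harg_le := arg_le_pi w
  rcases le_or_gt 0 w.im with him | him
  · have harg : 0 < arg w := (arg_nonneg_iff.2 him).lt_of_ne' fun h0 ↦ by
      obtain ⟨hre, him0⟩ := arg_eq_zero_iff.1 h0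
      rcases h with h | h <;> linarith
    refine exists_pow_three_eq_re_pos_im_pos hw (θ := arg w / 3) ⟨by linarith, by linarith⟩ ?_
    congr 2
    push_cast
    ring
  · have harg : arg w < -(π / 2) := by
      rw [← not_le, neg_pi_div_two_le_arg_iff]
      rcases h with h | h <;> push Not <;> constructor <;> linarith
    -- the branch `arg w + 2π` of the argument lands the cube root in the quadrant
    refine exists_pow_three_eq_re_pos_im_pos hw (θ := (arg w + 2 * π) / 3)
      ⟨by linarith, by linarith⟩ ?_
    rw [show (↑(3 * ((arg w + 2 * π) / 3)) * I : ℂ) = arg w * I + 2 * π * I by push_cast; ring,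
      exp_add, exp_two_pi_mul_I, mul_one]

theorem exp_neg_pi_div_four_mul_I : exp (-(π / 4) * I) = (√2 / 2 : ℝ) * (1 - I) := by
  rw [show -(π / 4 : ℂ) * I = ((-(π / 4) : ℝ) : ℂ) * I by push_cast; ring, exp_mul_I,
    ← ofReal_cos, ← ofReal_sin, Real.cos_neg, Real.sin_neg, Real.cos_pi_div_four,
    Real.sin_pi_div_four]
  push_cast
  ring

end Complex

/-- Eigenvalue existence condition for the one-dimensional biharmonic operator with a
complex delta potential of coupling `α`: there is a solution `k` of
`k³ = 2^{-3/2} α e^{-iπ/4}` lying in the open first quadrant (`Re k > 0`, `Im k > 0`)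
if and only if `Re α < |Im α|` (equivalently, `arg α ∈ (π/4, 7π/4)`). -/
theorem delta_1d_eigenvalue_condition (α : ℂ) :
    (∃ k : ℂ, k ^ 3 = ((2 : ℝ) ^ (-(3 : ℝ) / 2) : ℝ) * α * Complex.exp (-(π / 4) * Complex.I)
        ∧ 0 < k.re ∧ 0 < k.im)
      ↔ α.re < |α.im| := by
  have hs : 0 < (2 : ℝ) ^ (-(3 : ℝ) / 2) * (√2 / 2) := by positivity
  have hw : ((2 : ℝ) ^ (-(3 : ℝ) / 2) : ℝ) * α * exp (-(π / 4) * I)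
      = ((2 : ℝ) ^ (-(3 : ℝ) / 2) * (√2 / 2) : ℝ) * (α * (1 - I)) := by
    rw [exp_neg_pi_div_four_mul_I]
    push_cast
    ring
  have hs_mul_neg (x : ℝ) : (2 : ℝ) ^ (-(3 : ℝ) / 2) * (√2 / 2) * x < 0 ↔ x < 0 :=
    ⟨(neg_of_mul_neg_right · hs.le), mul_neg_of_pos_of_neg hs⟩
  rw [hw, exists_pow_three_eq_re_pos_im_pos_iff, re_ofReal_mul, im_ofReal_mul,
    mul_pos_iff_of_pos_left hs, hs_mul_neg, lt_abs]
  simp only [mul_re, mul_im, sub_re, sub_im, one_re, one_im, I_re, I_im]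
  constructor <;> rintro (h | h) <;> [left; right; left; right] <;> linarith
end
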